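/- arXiv:1607.06017 — 7 statements merged into one kernel-verified Lean document; each statement's English description precedes it below -/
import Mathlib

section
/- Let A ∈ R^{d×m} and B ∈ R^{d×m'} be column orthonormal matrices and η ≥ 0 satisfy Aᵀ B Bᵀ A ⪰ (1 − η)·I. Then there exists a matrix Q ∈ R^{m'×m} with ‖Q‖₂ ≤ 1 such that ‖A − BQ‖₂ ≤ √η; in fact Q = Bᵀ A works. -/
/-!
Take `Q = BᵀA` and the residual `R = A - BQ`. Since `BBᵀ` is an orthogonal projection,
Pythagoras gives `RᵀR = AᵀA - QᵀQ = 1 - QᵀQ`. Hence `1 - QᵀQ ⪰ 0`, i.e. `‖Q‖₂ ≤ 1`, and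
`η - RᵀR = AᵀBBᵀA - (1 - η) ⪰ 0`, i.e. `‖R‖₂ ≤ √η`.
-/

open Matrix

/-- the spectral norm (ℓ₂ operator norm) of a real matrix -/
noncomputable def specNorm {m n : ℕ} (A : Matrix (Fin m) (Fin n) ℝ) : ℝ :=
  ‖LinearMap.toContinuousLinearMap (Matrix.toEuclideanLin A)‖

theorem EuclideanSpace.real_norm_sq_eq_dotProduct {n : Type*} [Fintype n]
    (x : EuclideanSpace ℝ n) : ‖x‖ ^ 2 = WithLp.ofLp x ⬝ᵥ WithLp.ofLp x := by
  rw [EuclideanSpace.real_norm_sq_eq]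
  simp only [dotProduct, sq]

theorem Matrix.dotProduct_transpose_mul_self_mulVec {R m n : Type*} [CommSemiring R]
    [Fintype m] [Fintype n] (M : Matrix m n R) (v : n → R) :
    v ⬝ᵥ (Mᵀ * M) *ᵥ v = (M *ᵥ v) ⬝ᵥ (M *ᵥ v) := by
  rw [← mulVec_mulVec, dotProduct_mulVec, vecMul_transpose]

theorem specNorm_le_sqrt_of_posSemidef {p q : ℕ} (M : Matrix (Fin p) (Fin q) ℝ) {c : ℝ}
    (h : (c • (1 : Matrix (Fin q) (Fin q) ℝ) - Mᵀ * M).PosSemidef) :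
    specNorm M ≤ Real.sqrt c := by
  refine ContinuousLinearMap.opNorm_le_bound _ (Real.sqrt_nonneg c) fun x => ?_
  have hquad : ‖toEuclideanLin M x‖ ^ 2 ≤ c * ‖x‖ ^ 2 := by
    have := h.dotProduct_mulVec_nonneg (WithLp.ofLp x)
    rw [star_trivial, sub_mulVec, dotProduct_sub, smul_mulVec, one_mulVec, dotProduct_smul,
      smul_eq_mul, dotProduct_transpose_mul_self_mulVec] at this
    rw [EuclideanSpace.real_norm_sq_eq_dotProduct, EuclideanSpace.real_norm_sq_eq_dotProduct]
    exact sub_nonneg.mp this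
  calc ‖toEuclideanLin M x‖ = Real.sqrt (‖toEuclideanLin M x‖ ^ 2) :=
        (Real.sqrt_sq (norm_nonneg _)).symm
    _ ≤ Real.sqrt (c * ‖x‖ ^ 2) := Real.sqrt_le_sqrt hquad
    _ = Real.sqrt c * ‖x‖ := by rw [Real.sqrt_mul' c (sq_nonneg _), Real.sqrt_sq (norm_nonneg _)]

theorem Matrix.transpose_mul_self_sub_mul_transpose_mul {R m n k : Type*} [CommRing R]
    [Fintype m] [Fintype n] [Fintype k] [DecidableEq k]
    (A : Matrix m n R) (B : Matrix m k R) (hB : Bᵀ * B = 1) :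
    (A - B * (Bᵀ * A))ᵀ * (A - B * (Bᵀ * A)) = Aᵀ * A - (Bᵀ * A)ᵀ * (Bᵀ * A) := by
  have hBB : ∀ X : Matrix k n R, Bᵀ * (B * X) = X := fun X => by
    rw [← Matrix.mul_assoc, hB, Matrix.one_mul]
  simp only [transpose_sub, transpose_mul, transpose_transpose, Matrix.sub_mul, Matrix.mul_sub,
    Matrix.mul_assoc, hBB]
  abel

theorem exists_contraction_close_general {d m m' : ℕ}
    (A : Matrix (Fin d) (Fin m) ℝ) (B : Matrix (Fin d) (Fin m') ℝ)
    (hA : Aᵀ * A = 1) (hB : Bᵀ * B = 1)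
    (η : ℝ)
    (h : (Aᵀ * B * Bᵀ * A - (1 - η) • (1 : Matrix (Fin m) (Fin m) ℝ)).PosSemidef) :
    ∃ Q : Matrix (Fin m') (Fin m) ℝ,
      specNorm Q ≤ 1 ∧ specNorm (A - B * Q) ≤ Real.sqrt η ∧ Q = Bᵀ * A := by
  set R := A - B * (Bᵀ * A)
  have hR : Rᵀ * R = 1 - (Bᵀ * A)ᵀ * (Bᵀ * A) := by
    rw [transpose_mul_self_sub_mul_transpose_mul A B hB, hA]
  refine ⟨Bᵀ * A, ?_, ?_, rfl⟩
  · rw [← Real.sqrt_one]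
    apply specNorm_le_sqrt_of_posSemidef
    rw [one_smul, ← hR, ← conjTranspose_eq_transpose_of_trivial]
    exact posSemidef_conjTranspose_mul_self R
  · apply specNorm_le_sqrt_of_posSemidef
    convert h using 1
    rw [hR, transpose_mul, Matrix.mul_assoc, Matrix.mul_assoc, Matrix.mul_assoc, sub_smul,
      one_smul]
    abel

/-- If `A, B` are column orthonormal and `AᵀBBᵀA ⪰ (1−η)·I`, then there is
`Q` with `‖Q‖₂ ≤ 1` and `‖A − BQ‖₂ ≤ √η`; indeed `Q = BᵀA` works. -/
theorem exists_contraction_close {d m m' : ℕ}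
    (A : Matrix (Fin d) (Fin m) ℝ) (B : Matrix (Fin d) (Fin m') ℝ)
    (hA : Aᵀ * A = 1) (hB : Bᵀ * B = 1)
    (η : ℝ) (hη : 0 ≤ η)
    (h : (Aᵀ * B * Bᵀ * A - (1 - η) • (1 : Matrix (Fin m) (Fin m) ℝ)).PosSemidef) :
    ∃ Q : Matrix (Fin m') (Fin m) ℝ,
      specNorm Q ≤ 1 ∧ specNorm (A - B * Q) ≤ Real.sqrt η ∧ Q = Bᵀ * A :=
  exists_contraction_close_general A B hA hB η h
end

section
/- Let M ∈ R^{d×d} be a symmetric matrix with (not necessarily sorted) eigenvalues λ₁, …, λ_d and corresponding orthonormal eigenvectors u₁, …, u_d. For k ≥ 1 define U^⊥ = (u₁, …, u_k) ∈ R^{d×k} and U = (u_{k+1}, …, u_d) ∈ R^{d×(d−k)}. Let ε ∈ (0, 1/2), let V_s ∈ R^{d×s} be a column orthonormal matrix with ‖V_sᵀ U‖₂ ≤ ε, and let Q_s ∈ R^{d×s} be a column orthonormal matrix whose columns form an orthonormal basis of the column span of U^⊥ (U^⊥)ᵀ V_s. Then ‖(I − Q_s Q_sᵀ) M (I − Q_s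 Q_sᵀ) − (I − V_s V_sᵀ) M (I − V_s V_sᵀ)‖₂ ≤ 13 ε ‖M‖₂. -/
open Matrix

/-- the Euclidean dot product of two real vectors -/
def vdot {ι : Type*} [Fintype ι] (u v : ι → ℝ) : ℝ := ∑ i, u i * v i

namespace ApproxProjAux

open scoped RealInnerProductSpace

noncomputable def toCLM {m n : ℕ} (A : Matrix (Fin m) (Fin n) ℝ) :
    EuclideanSpace ℝ (Fin n) →L[ℝ] EuclideanSpace ℝ (Fin m) :=
  LinearMap.toContinuousLinearMap (Matrix.toEuclideanLin A)

lemma specNorm_def {m n : ℕ} (A : Matrix (Fin m) (Fin n) ℝ) : specNorm A = ‖toCLM A‖ := rfl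

lemma toCLM_apply {m n : ℕ} (A : Matrix (Fin m) (Fin n) ℝ) (x : EuclideanSpace ℝ (Fin n)) :
    toCLM A x = (WithLp.equiv 2 (Fin m → ℝ)).symm (A.mulVec (WithLp.equiv 2 (Fin n → ℝ) x)) := by
  simp [toCLM, Matrix.toEuclideanLin_apply]

lemma toCLM_mul_apply {m n p : ℕ} (A : Matrix (Fin m) (Fin n) ℝ) (B : Matrix (Fin n) (Fin p) ℝ)
    (x : EuclideanSpace ℝ (Fin p)) : toCLM (A * B) x = toCLM A (toCLM B x) := by
  simp [toCLM_apply, Matrix.mulVec_mulVec]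

lemma toCLM_one {n : ℕ} (x : EuclideanSpace ℝ (Fin n)) :
    toCLM (1 : Matrix (Fin n) (Fin n) ℝ) x = x := by
  simp [toCLM_apply]

lemma toCLM_adjoint {m n : ℕ} (A : Matrix (Fin m) (Fin n) ℝ) :
    toCLM Aᵀ = ContinuousLinearMap.adjoint (toCLM A) := by
  have h : Aᵀ = Aᴴ := by ext i j; simp [Matrix.conjTranspose_apply]
  rw [h, toCLM, toCLM, Matrix.toEuclideanLin_conjTranspose_eq_adjoint,
    LinearMap.adjoint_toContinuousLinearMap]

lemma specNorm_transpose {m n : ℕ} (A : Matrix (Fin m) (Fin n) ℝ) :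
    specNorm Aᵀ = specNorm A := by
  rw [specNorm_def, specNorm_def, toCLM_adjoint]
  exact ContinuousLinearMap.adjoint.norm_map (toCLM A)

lemma specNorm_nonneg {m n : ℕ} (A : Matrix (Fin m) (Fin n) ℝ) : 0 ≤ specNorm A :=
  norm_nonneg _

lemma specNorm_mul_le {m n p : ℕ} (A : Matrix (Fin m) (Fin n) ℝ) (B : Matrix (Fin n) (Fin p) ℝ) :
    specNorm (A * B) ≤ specNorm A * specNorm B := by
  have h : toCLM (A * B) = (toCLM A).comp (toCLM B) := by
    ext x
    rw [ContinuousLinearMap.comp_apply, toCLM_mul_apply]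
  rw [specNorm_def, h]
  exact ContinuousLinearMap.opNorm_comp_le _ _

lemma specNorm_mul_le' {m n p : ℕ} {A : Matrix (Fin m) (Fin n) ℝ} {B : Matrix (Fin n) (Fin p) ℝ}
    {a b : ℝ} (ha : 0 ≤ a) (hA : specNorm A ≤ a) (hB : specNorm B ≤ b) :
    specNorm (A * B) ≤ a * b :=
  le_trans (specNorm_mul_le A B) (mul_le_mul hA hB (specNorm_nonneg _) ha)

lemma toCLM_sub {m n : ℕ} (A B : Matrix (Fin m) (Fin n) ℝ) :
    toCLM (A - B) = toCLM A - toCLM B := by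
  simp [toCLM, map_sub]

lemma toCLM_neg {m n : ℕ} (A : Matrix (Fin m) (Fin n) ℝ) :
    toCLM (-A) = -toCLM A := by
  simp [toCLM, map_neg]

lemma specNorm_neg {m n : ℕ} (A : Matrix (Fin m) (Fin n) ℝ) :
    specNorm (-A) = specNorm A := by
  rw [specNorm_def, specNorm_def, toCLM_neg, norm_neg]

lemma specNorm_add_le {m n : ℕ} (A B : Matrix (Fin m) (Fin n) ℝ) :
    specNorm (A + B) ≤ specNorm A + specNorm B := by
  rw [specNorm_def, specNorm_def, specNorm_def]
  have : toCLM (A + B) = toCLM A + toCLM B := by simp [toCLM, map_add]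
  rw [this]; exact norm_add_le _ _

lemma specNorm_sub_le {m n : ℕ} (A B : Matrix (Fin m) (Fin n) ℝ) :
    specNorm (A - B) ≤ specNorm A + specNorm B := by
  rw [specNorm_def, specNorm_def, specNorm_def, toCLM_sub]; exact norm_sub_le _ _

lemma inner_toCLM {m n : ℕ} (A : Matrix (Fin m) (Fin n) ℝ) (x : EuclideanSpace ℝ (Fin n))
    (y : EuclideanSpace ℝ (Fin m)) : ⟪toCLM A x, y⟫ = ⟪x, toCLM Aᵀ y⟫ := by
  rw [toCLM_adjoint]
  exact (ContinuousLinearMap.adjoint_inner_right (toCLM A) x y).symm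

lemma norm_toCLM_sq {m n : ℕ} (A : Matrix (Fin m) (Fin n) ℝ) (x : EuclideanSpace ℝ (Fin n)) :
    ‖toCLM A x‖ ^ 2 = ⟪x, toCLM (Aᵀ * A) x⟫ := by
  rw [toCLM_mul_apply, ← inner_toCLM, real_inner_self_eq_norm_sq]

lemma norm_toCLM_of_orth {m n : ℕ} {V : Matrix (Fin m) (Fin n) ℝ} (h : Vᵀ * V = 1)
    (x : EuclideanSpace ℝ (Fin n)) : ‖toCLM V x‖ = ‖x‖ := by
  have h1 : ‖toCLM V x‖ ^ 2 = ‖x‖ ^ 2 := by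
    rw [norm_toCLM_sq, h, toCLM_one, real_inner_self_eq_norm_sq]
  have h2 := norm_nonneg (toCLM V x); have h3 := norm_nonneg x
  nlinarith

lemma specNorm_of_orth_le_one {m n : ℕ} {V : Matrix (Fin m) (Fin n) ℝ} (h : Vᵀ * V = 1) :
    specNorm V ≤ 1 := by
  rw [specNorm_def]
  refine ContinuousLinearMap.opNorm_le_bound _ zero_le_one fun x => ?_
  rw [norm_toCLM_of_orth h, one_mul]

lemma specNorm_le_of_bound {m n : ℕ} {A : Matrix (Fin m) (Fin n) ℝ} {c : ℝ} (hc : 0 ≤ c)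
    (h : ∀ x : EuclideanSpace ℝ (Fin n), ‖toCLM A x‖ ≤ c * ‖x‖) : specNorm A ≤ c :=
  ContinuousLinearMap.opNorm_le_bound _ hc h

lemma norm_toCLM_le {m n : ℕ} {A : Matrix (Fin m) (Fin n) ℝ} {c : ℝ} (h : specNorm A ≤ c)
    (x : EuclideanSpace ℝ (Fin n)) : ‖toCLM A x‖ ≤ c * ‖x‖ :=
  le_trans ((toCLM A).le_opNorm x) (by gcongr; exact (specNorm_def A) ▸ h)

lemma specNorm_one_sub_proj {n : ℕ} {P : Matrix (Fin n) (Fin n) ℝ} (hsym : Pᵀ = P)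
    (hidem : P * P = P) : specNorm (1 - P) ≤ 1 := by
  refine specNorm_le_of_bound zero_le_one fun x => ?_
  have hkey : (1 - P)ᵀ * (1 - P) = 1 - P := by
    rw [Matrix.transpose_sub, Matrix.transpose_one, hsym, Matrix.sub_mul, Matrix.mul_sub,
      Matrix.mul_sub, Matrix.one_mul, Matrix.mul_one, Matrix.one_mul, hidem]
    abel
  have h1 : ‖toCLM (1 - P) x‖ ^ 2 = ⟪x, toCLM (1 - P) x⟫ := by
    rw [norm_toCLM_sq, hkey]
  have h2 : ⟪x, toCLM (1 - P) x⟫ ≤ ‖x‖ * ‖toCLM (1 - P) x‖ := real_inner_le_norm _ _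
  have h3 := norm_nonneg (toCLM (1 - P) x); have h4 := norm_nonneg x
  nlinarith

/-- If `N R` has orthonormal columns and `Nᵀ N = 1 - Cᵀ C` with `‖C‖ ≤ ε < 1/2`,
then `‖R‖ ≤ 2`. -/
lemma specNorm_R_le_two {m n p : ℕ} {N : Matrix (Fin m) (Fin n) ℝ}
    {R : Matrix (Fin n) (Fin n) ℝ} {C : Matrix (Fin p) (Fin n) ℝ} {ε : ℝ}
    (hε0 : 0 ≤ ε) (hε : ε < 1 / 2) (hNN : Nᵀ * N = 1 - Cᵀ * C) (hC : specNorm C ≤ ε)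
    (horth : (N * R)ᵀ * (N * R) = 1) : specNorm R ≤ 2 := by
  refine specNorm_le_of_bound (by norm_num) fun x => ?_
  set y := toCLM R x with hy'
  have hx : ‖toCLM N y‖ = ‖x‖ := by
    rw [hy', ← toCLM_mul_apply, norm_toCLM_of_orth horth]
  have hsq : ‖toCLM N y‖ ^ 2 = ‖y‖ ^ 2 - ‖toCLM C y‖ ^ 2 := by
    rw [norm_toCLM_sq, hNN, toCLM_sub, ContinuousLinearMap.sub_apply, inner_sub_right,
      toCLM_one, real_inner_self_eq_norm_sq, norm_toCLM_sq, norm_toCLM_sq C y]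
  have hCy : ‖toCLM C y‖ ≤ ε * ‖y‖ := norm_toCLM_le hC y
  have h2 := norm_nonneg y; have h3 := norm_nonneg x
  have h4 := norm_nonneg (toCLM C y)
  have h5 : ε * ‖y‖ ≤ 1 / 2 * ‖y‖ := mul_le_mul_of_nonneg_right hε.le h2
  have h6 : ‖toCLM C y‖ * ‖toCLM C y‖ ≤ (1 / 2 * ‖y‖) * (1 / 2 * ‖y‖) :=
    mul_self_le_mul_self h4 (le_trans hCy h5)
  nlinarith [sq_nonneg (‖y‖ - 2 * ‖x‖), sq_nonneg (‖y‖ + 2 * ‖x‖)]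

lemma sum_split {d k : ℕ} (hkd : k ≤ d) (h : k + (d - k) = d) (f : Fin d → ℝ) :
    ∑ i, f i = (∑ j : Fin k, f (Fin.castLE hkd j)) +
      ∑ j : Fin (d - k), f (Fin.cast h (Fin.natAdd k j)) := by
  rw [← Equiv.sum_comp (finSumFinEquiv.trans (finCongr h)) f, Fintype.sum_sum_type]
  congr 1

end ApproxProjAux

set_option maxHeartbeats 1600000 in
open ApproxProjAux in
/-- **approximate projection lemma.** Projecting `M` to the orthogonal complement
of `V_s` is almost the same as projecting to the orthogonal complement of `Q_s`, where `Q_s` is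
an orthonormal basis of the column span of `U^⊥(U^⊥)ᵀ V_s` and `‖V_sᵀ U‖₂ ≤ ε`. -/
theorem approximate_projection {d k s : ℕ} (hk : 1 ≤ k) (hkd : k ≤ d)
    (M : Matrix (Fin d) (Fin d) ℝ) (hM : M.IsSymm)
    (u : Fin d → Fin d → ℝ) (lam : Fin d → ℝ)
    (horth : ∀ i j, vdot (u i) (u j) = if i = j then (1 : ℝ) else 0)
    (heig : ∀ i, M.mulVec (u i) = lam i • u i)
    (ε : ℝ) (hε₀ : 0 < ε) (hε : ε < 1 / 2)
    -- `U^⊥ = (u₁, …, u_k)` and `U = (u_{k+1}, …, u_d)`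
    (Uperp : Matrix (Fin d) (Fin k) ℝ)
    (hUperp : Uperp = Matrix.of fun r c => u (Fin.castLE hkd c) r)
    (U : Matrix (Fin d) (Fin (d - k)) ℝ)
    (hU : U = Matrix.of fun r c => u (Fin.cast (by omega) (Fin.natAdd k c)) r)
    (Vs : Matrix (Fin d) (Fin s) ℝ) (hVs : Vsᵀ * Vs = 1)
    (hcorr : specNorm (Vsᵀ * U) ≤ ε)
    -- `Q_s` : an orthonormal basis of the column span of `U^⊥ (U^⊥)ᵀ V_s`
    (Qs : Matrix (Fin d) (Fin s) ℝ) (hQs : Qsᵀ * Qs = 1)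
    (R : Matrix (Fin s) (Fin s) ℝ) (hR : Qs = Uperp * Uperpᵀ * Vs * R) :
    specNorm ((1 - Qs * Qsᵀ) * M * (1 - Qs * Qsᵀ) - (1 - Vs * Vsᵀ) * M * (1 - Vs * Vsᵀ))
      ≤ 13 * ε * specNorm M := by
  have hadd : k + (d - k) = d := by omega
  -- orthonormality of columns of U and Uperp
  have hUo : Uᵀ * U = 1 := by
    ext i j
    rw [hU]
    simp only [Matrix.mul_apply, Matrix.transpose_apply, Matrix.of_apply, Matrix.one_apply]
    rw [show (∑ x, u (Fin.cast hadd (Fin.natAdd k i)) x * u (Fin.cast hadd (Fin.natAdd k j)) x)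
        = vdot (u (Fin.cast hadd (Fin.natAdd k i))) (u (Fin.cast hadd (Fin.natAdd k j))) from rfl,
      horth]
    congr 1
    simp only [eq_iff_iff, Fin.ext_iff, Fin.coe_cast, Fin.coe_natAdd]
    omega
  have hUpo : Uperpᵀ * Uperp = 1 := by
    ext i j
    rw [hUperp]
    simp only [Matrix.mul_apply, Matrix.transpose_apply, Matrix.of_apply, Matrix.one_apply]
    rw [show (∑ x, u (Fin.castLE hkd i) x * u (Fin.castLE hkd j) x)
        = vdot (u (Fin.castLE hkd i)) (u (Fin.castLE hkd j)) from rfl, horth]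
    congr 1
    simp only [eq_iff_iff, Fin.ext_iff, Fin.coe_castLE]
  -- completeness: Uperp Uperpᵀ + U Uᵀ = 1
  have hcompl : Uperp * Uperpᵀ + U * Uᵀ = 1 := by
    have hW : (Matrix.of fun r (c : Fin d) => u c r)ᵀ * (Matrix.of fun r c => u c r) = 1 := by
      ext i j
      simp only [Matrix.mul_apply, Matrix.transpose_apply, Matrix.of_apply, Matrix.one_apply]
      rw [show (∑ x, u i x * u j x) = vdot (u i) (u j) from rfl, horth]
    have hW2 := mul_eq_one_comm.mp hW
    rw [← hW2]
    ext r c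
    simp only [Matrix.add_apply, Matrix.mul_apply, Matrix.transpose_apply, Matrix.of_apply,
      hUperp, hU]
    rw [sum_split hkd hadd (fun i => u i r * u i c)]
  set P : Matrix (Fin d) (Fin d) ℝ := Uperp * Uperpᵀ with hPdef
  set N : Matrix (Fin d) (Fin s) ℝ := P * Vs with hNdef
  -- now hR : Qs = N * R
  have hPsym : Pᵀ = P := by rw [hPdef, Matrix.transpose_mul, Matrix.transpose_transpose]
  have hPidem : P * P = P := by
    rw [hPdef]
    have : Uperp * Uperpᵀ * (Uperp * Uperpᵀ) = Uperp * ((Uperpᵀ * Uperp) * Uperpᵀ) := by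
      simp only [Matrix.mul_assoc]
    rw [this, hUpo, Matrix.one_mul]
  have hPU : P = 1 - U * Uᵀ := by rw [hPdef, ← hcompl]; abel
  have hNalt : N = Vs - U * (Uᵀ * Vs) := by
    rw [hNdef, hPU, Matrix.sub_mul, Matrix.one_mul, Matrix.mul_assoc]
  -- R is invertible with explicit left/right inverse B
  set B : Matrix (Fin s) (Fin s) ℝ := Rᵀ * (Nᵀ * N) with hBdef
  have hBR : B * R = 1 := by
    have h1 : B * R = (N * R)ᵀ * (N * R) := by
      rw [hBdef]
      simp only [Matrix.transpose_mul, Matrix.mul_assoc]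
    rw [h1, ← hR, hQs]
  have hRB : R * B = 1 := mul_eq_one_comm.mp hBR
  have hNQ : N = Qs * B := by rw [hR, Matrix.mul_assoc, hRB, Matrix.mul_one]
  -- key vanishing identities
  have hQsQ : (1 - Qs * Qsᵀ) * Qs = 0 := by
    rw [Matrix.sub_mul, Matrix.one_mul, Matrix.mul_assoc, hQs, Matrix.mul_one, sub_self]
  have hperp : (1 - Qs * Qsᵀ) * N = 0 := by
    rw [hNQ, ← Matrix.mul_assoc, hQsQ, Matrix.zero_mul]
  have hVV : (1 - Vs * Vsᵀ) * Vs = 0 := by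
    rw [Matrix.sub_mul, Matrix.one_mul, Matrix.mul_assoc, hVs, Matrix.mul_one, sub_self]
  -- norm facts
  have hUn : specNorm U ≤ 1 := specNorm_of_orth_le_one hUo
  have hUV : specNorm (Uᵀ * Vs) ≤ ε := by
    have h1 : Uᵀ * Vs = (Vsᵀ * U)ᵀ := by
      rw [Matrix.transpose_mul, Matrix.transpose_transpose]
    rw [h1, specNorm_transpose]; exact hcorr
  have hQproj : (Qs * Qsᵀ) * (Qs * Qsᵀ) = Qs * Qsᵀ := by
    have h1 : Qs * Qsᵀ * (Qs * Qsᵀ) = Qs * ((Qsᵀ * Qs) * Qsᵀ) := by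
      simp only [Matrix.mul_assoc]
    rw [h1, hQs, Matrix.one_mul]
  have hVproj : (Vs * Vsᵀ) * (Vs * Vsᵀ) = Vs * Vsᵀ := by
    have h1 : Vs * Vsᵀ * (Vs * Vsᵀ) = Vs * ((Vsᵀ * Vs) * Vsᵀ) := by
      simp only [Matrix.mul_assoc]
    rw [h1, hVs, Matrix.one_mul]
  have h1Q : specNorm (1 - Qs * Qsᵀ) ≤ 1 :=
    specNorm_one_sub_proj (by rw [Matrix.transpose_mul, Matrix.transpose_transpose]) hQproj
  have h1V : specNorm (1 - Vs * Vsᵀ) ≤ 1 :=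
    specNorm_one_sub_proj (by rw [Matrix.transpose_mul, Matrix.transpose_transpose]) hVproj
  have hQn : specNorm Qs ≤ 1 := specNorm_of_orth_le_one hQs
  have hVtn : specNorm Vsᵀ ≤ 1 := by
    rw [specNorm_transpose]; exact specNorm_of_orth_le_one hVs
  -- ‖R‖ ≤ 2
  have hNN : Nᵀ * N = 1 - (Uᵀ * Vs)ᵀ * (Uᵀ * Vs) := by
    have h1 : Nᵀ * N = Vsᵀ * (P * (P * Vs)) := by
      rw [hNdef, Matrix.transpose_mul, hPsym]
      simp only [Matrix.mul_assoc]
    have h2 : P * (P * Vs) = P * Vs := by rw [← Matrix.mul_assoc, hPidem]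
    rw [h1, h2, hPU]
    simp only [Matrix.sub_mul, Matrix.one_mul, Matrix.mul_sub, Matrix.transpose_mul,
      Matrix.transpose_transpose, Matrix.mul_assoc, hVs]
  have hRn : specNorm R ≤ 2 := by
    refine specNorm_R_le_two hε₀.le hε hNN hUV ?_
    rw [← hR]; exact hQs
  -- bound (1 - QQᵀ) Vs
  have bound1 : specNorm ((1 - Qs * Qsᵀ) * Vs) ≤ ε := by
    have hE : (1 - Qs * Qsᵀ) * Vs = (1 - Qs * Qsᵀ) * (U * (Uᵀ * Vs)) := by
      have h1 : Vs = N + U * (Uᵀ * Vs) := by rw [hNalt]; abel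
      conv_lhs => rw [h1]
      rw [Matrix.mul_add, hperp, zero_add]
    rw [hE, ← Matrix.mul_assoc]
    calc specNorm ((1 - Qs * Qsᵀ) * U * (Uᵀ * Vs))
        ≤ (1 * 1) * ε := by
          refine specNorm_mul_le' (by norm_num) ?_ hUV
          exact specNorm_mul_le' zero_le_one h1Q hUn
      _ = ε := by ring
  -- bound (1 - VVᵀ) Qs
  have bound2 : specNorm ((1 - Vs * Vsᵀ) * Qs) ≤ 2 * ε := by
    have hQalt : Qs = Vs * R - U * ((Uᵀ * Vs) * R) := by
      rw [hR, hNalt, Matrix.sub_mul]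
      simp only [Matrix.mul_assoc]
    have hz : (1 - Vs * Vsᵀ) * (Vs * R) = 0 := by
      rw [← Matrix.mul_assoc, hVV, Matrix.zero_mul]
    have hE : (1 - Vs * Vsᵀ) * Qs = -((1 - Vs * Vsᵀ) * (U * ((Uᵀ * Vs) * R))) := by
      rw [hQalt, Matrix.mul_sub, hz, zero_sub]
    rw [hE, specNorm_neg]
    calc specNorm ((1 - Vs * Vsᵀ) * (U * ((Uᵀ * Vs) * R)))
        ≤ 1 * (1 * (ε * 2)) := by
          refine specNorm_mul_le' zero_le_one h1V ?_
          refine specNorm_mul_le' zero_le_one hUn ?_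
          exact specNorm_mul_le' hε₀.le hUV hRn
      _ = 2 * ε := by ring
  -- ‖QQᵀ - VVᵀ‖ ≤ 3 ε
  have hA : specNorm (Qs * Qsᵀ - Vs * Vsᵀ) ≤ 3 * ε := by
    have hdecomp : Qs * Qsᵀ - Vs * Vsᵀ
        = Qs * ((1 - Vs * Vsᵀ) * Qs)ᵀ - ((1 - Qs * Qsᵀ) * Vs) * Vsᵀ := by
      simp only [Matrix.transpose_mul, Matrix.transpose_sub, Matrix.transpose_one,
        Matrix.transpose_transpose, Matrix.mul_sub, Matrix.sub_mul, Matrix.mul_one,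
        Matrix.one_mul, Matrix.mul_assoc]
      abel
    rw [hdecomp]
    have t1 : specNorm (Qs * ((1 - Vs * Vsᵀ) * Qs)ᵀ) ≤ 1 * (2 * ε) := by
      refine specNorm_mul_le' zero_le_one hQn ?_
      rw [specNorm_transpose]; exact bound2
    have t2 : specNorm (((1 - Qs * Qsᵀ) * Vs) * Vsᵀ) ≤ ε * 1 :=
      specNorm_mul_le' hε₀.le bound1 hVtn
    calc specNorm _ ≤ _ + _ := specNorm_sub_le _ _
      _ ≤ 1 * (2 * ε) + ε * 1 := add_le_add t1 t2
      _ = 3 * ε := by ring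
  -- final assembly
  have hdecomp : (1 - Qs * Qsᵀ) * M * (1 - Qs * Qsᵀ) - (1 - Vs * Vsᵀ) * M * (1 - Vs * Vsᵀ)
      = (1 - Qs * Qsᵀ) * M * (-(Qs * Qsᵀ - Vs * Vsᵀ))
        + (-(Qs * Qsᵀ - Vs * Vsᵀ)) * M * (1 - Vs * Vsᵀ) := by
    simp only [Matrix.mul_sub, Matrix.sub_mul, Matrix.mul_one, Matrix.one_mul,
      Matrix.mul_neg, Matrix.neg_mul]
    abel
  rw [hdecomp]
  have hMn := specNorm_nonneg M
  have t1 : specNorm ((1 - Qs * Qsᵀ) * M * (-(Qs * Qsᵀ - Vs * Vsᵀ)))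
      ≤ (1 * specNorm M) * (3 * ε) := by
    have h1 : specNorm (-(Qs * Qsᵀ - Vs * Vsᵀ)) ≤ 3 * ε := by rw [specNorm_neg]; exact hA
    refine specNorm_mul_le' (by positivity) ?_ h1
    exact specNorm_mul_le' zero_le_one h1Q le_rfl
  have t2 : specNorm ((-(Qs * Qsᵀ - Vs * Vsᵀ)) * M * (1 - Vs * Vsᵀ))
      ≤ ((3 * ε) * specNorm M) * 1 := by
    have h1 : specNorm (-(Qs * Qsᵀ - Vs * Vsᵀ)) ≤ 3 * ε := by rw [specNorm_neg]; exact hA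
    refine specNorm_mul_le' (by positivity) ?_ h1V
    exact specNorm_mul_le' (by positivity) h1 le_rfl
  calc specNorm _ ≤ _ + _ := specNorm_add_le _ _
    _ ≤ (1 * specNorm M) * (3 * ε) + ((3 * ε) * specNorm M) * 1 := add_le_add t1 t2
    _ = 6 * ε * specNorm M := by ring
    _ ≤ 13 * ε * specNorm M := by nlinarith
end

section
/- (Two-sided gap-free Wedin theorem.) Let ε ≥ 0 and let A, B ∈ R^{d×d} be symmetric matrices with ‖A − B‖₂ ≤ ε. Let μ ≥ 0 and τ > 0. Let U be a column orthonormal matrix whose columns are eigenvectors of A whose eigenvalues have absolute value ≤ μ, and let V be a column orthonormal matrix whose columns are eigenvectors of B whose eigenvalues have absolute value ≥ μ + τ. Then ‖Uᵀ V‖₂ ≤ ε/τ. -/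
open Matrix

open scoped Matrix.Norms.L2Operator

lemma specNorm_eq {m n : ℕ} (A : Matrix (Fin m) (Fin n) ℝ) : specNorm A = ‖A‖ := rfl

lemma l2_norm_one_le {n : ℕ} : ‖(1 : Matrix (Fin n) (Fin n) ℝ)‖ ≤ 1 := by
  have h : ‖(1 : Matrix (Fin n) (Fin n) ℝ)ᴴ * 1‖ = ‖(1 : Matrix (Fin n) (Fin n) ℝ)‖ *
      ‖(1 : Matrix (Fin n) (Fin n) ℝ)‖ := Matrix.l2_opNorm_conjTranspose_mul_self _
  simp only [Matrix.conjTranspose_one, Matrix.one_mul] at h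
  nlinarith [norm_nonneg (1 : Matrix (Fin n) (Fin n) ℝ)]

lemma l2_norm_orthonormal_le {d p : ℕ} (U : Matrix (Fin d) (Fin p) ℝ)
    (hU : Uᵀ * U = 1) : ‖U‖ ≤ 1 := by
  have h : ‖Uᴴ * U‖ = ‖U‖ * ‖U‖ := Matrix.l2_opNorm_conjTranspose_mul_self U
  have hUc : Uᴴ = Uᵀ := by
    ext i j; simp [Matrix.conjTranspose_apply]
  rw [hUc, hU] at h
  nlinarith [norm_nonneg U, l2_norm_one_le (n := p)]

lemma l2_norm_diagonal_le {n : ℕ} (w : Fin n → ℝ) (c : ℝ) (hc : 0 ≤ c)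
    (h : ∀ i, |w i| ≤ c) : ‖(Matrix.diagonal w : Matrix (Fin n) (Fin n) ℝ)‖ ≤ c := by
  rw [Matrix.l2_opNorm_def]
  refine ContinuousLinearMap.opNorm_le_bound _ hc fun x => ?_
  show ‖Matrix.toEuclideanLin (Matrix.diagonal w) x‖ ≤ c * ‖x‖
  have happ : ∀ i, (Matrix.toEuclideanLin (Matrix.diagonal w) x) i = w i * x i := by
    intro i
    rw [Matrix.toEuclideanLin_apply]
    simp [Matrix.mulVec_diagonal]
  have hnn : 0 ≤ c * ‖x‖ := mul_nonneg hc (norm_nonneg x)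
  rw [← Real.sqrt_sq hnn, EuclideanSpace.norm_eq]
  apply Real.sqrt_le_sqrt
  have hxn : ‖x‖ = Real.sqrt (∑ i, ‖x i‖ ^ 2) := EuclideanSpace.norm_eq x
  have hsq : (c * ‖x‖) ^ 2 = c ^ 2 * ∑ i, ‖x i‖ ^ 2 := by
    rw [mul_pow, hxn, Real.sq_sqrt]
    positivity
  rw [hsq, Finset.mul_sum]
  apply Finset.sum_le_sum
  intro i _
  rw [happ i, Real.norm_eq_abs, Real.norm_eq_abs, abs_mul]
  have hwc := h i
  calc (|w i| * |x i|) ^ 2 = |w i| ^ 2 * |x i| ^ 2 := by ring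
    _ ≤ c ^ 2 * |x i| ^ 2 :=
      mul_le_mul_of_nonneg_right (pow_le_pow_left₀ (abs_nonneg _) hwc 2) (sq_nonneg _)

/-- **two-sided gap-free Wedin theorem.** If `‖A − B‖₂ ≤ ε`, the columns of `U`
are eigenvectors of `A` with absolute eigenvalue `≤ μ`, and the columns of `V` are eigenvectors
of `B` with absolute eigenvalue `≥ μ + τ`, then `‖Uᵀ V‖₂ ≤ ε/τ`. -/
theorem gap_free_wedin {d p q : ℕ}
    (A B : Matrix (Fin d) (Fin d) ℝ) (hA : A.IsSymm) (hB : B.IsSymm)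
    (ε : ℝ) (hε : 0 ≤ ε) (hAB : specNorm (A - B) ≤ ε)
    (μ τ : ℝ) (hμ : 0 ≤ μ) (hτ : 0 < τ)
    (U : Matrix (Fin d) (Fin p) ℝ) (hU : Uᵀ * U = 1)
    (hUeig : ∀ c : Fin p, ∃ lam : ℝ, |lam| ≤ μ ∧ A.mulVec (Uᵀ c) = lam • Uᵀ c)
    (V : Matrix (Fin d) (Fin q) ℝ) (hV : Vᵀ * V = 1)
    (hVeig : ∀ c : Fin q, ∃ lam : ℝ, μ + τ ≤ |lam| ∧ B.mulVec (Vᵀ c) = lam • Vᵀ c) :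
    specNorm (Uᵀ * V) ≤ ε / τ := by
  classical
  -- eigenvalue functions
  set lamU : Fin p → ℝ := fun c => (hUeig c).choose with hlamU
  set lamV : Fin q → ℝ := fun c => (hVeig c).choose with hlamV
  have hlamU_bd : ∀ c, |lamU c| ≤ μ := fun c => (hUeig c).choose_spec.1
  have hlamU_eq : ∀ c, A.mulVec (Uᵀ c) = lamU c • Uᵀ c := fun c => (hUeig c).choose_spec.2
  have hlamV_bd : ∀ c, μ + τ ≤ |lamV c| := fun c => (hVeig c).choose_spec.1
  have hlamV_eq : ∀ c, B.mulVec (Vᵀ c) = lamV c • Vᵀ c := fun c => (hVeig c).choose_spec.2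
  have hμτ : 0 < μ + τ := by linarith
  have hlamV_ne : ∀ c, lamV c ≠ 0 := by
    intro c hc
    have := hlamV_bd c
    rw [hc, abs_zero] at this
    linarith
  set Λ : Matrix (Fin p) (Fin p) ℝ := Matrix.diagonal lamU with hΛ
  set N : Matrix (Fin q) (Fin q) ℝ := Matrix.diagonal lamV with hN
  set N' : Matrix (Fin q) (Fin q) ℝ := Matrix.diagonal (fun c => (lamV c)⁻¹) with hN'
  have hNN' : N * N' = 1 := by
    rw [hN, hN', Matrix.diagonal_mul_diagonal]
    rw [show (fun i => lamV i * (lamV i)⁻¹) = fun _ => (1 : ℝ) from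
      funext fun i => mul_inv_cancel₀ (hlamV_ne i)]
    exact Matrix.diagonal_one
  -- A * U = U * Λ
  have hAU : A * U = U * Λ := by
    ext i c
    have := congrFun (hlamU_eq c) i
    simp only [Matrix.mulVec, dotProduct, Pi.smul_apply, smul_eq_mul,
      Matrix.transpose_apply] at this
    rw [Matrix.mul_apply, hΛ, Matrix.mul_diagonal]
    simpa [mul_comm] using this
  -- B * V = V * N
  have hBV : B * V = V * N := by
    ext i c
    have := congrFun (hlamV_eq c) i
    simp only [Matrix.mulVec, dotProduct, Pi.smul_apply, smul_eq_mul,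
      Matrix.transpose_apply] at this
    rw [Matrix.mul_apply, hN, Matrix.mul_diagonal]
    simpa [mul_comm] using this
  -- Uᵀ * A = Λ * Uᵀ
  have hUA : Uᵀ * A = Λ * Uᵀ := by
    have h1 := congrArg Matrix.transpose hAU
    rw [Matrix.transpose_mul, Matrix.transpose_mul, hA.eq, hΛ,
      Matrix.diagonal_transpose] at h1
    exact h1
  set X : Matrix (Fin p) (Fin q) ℝ := Uᵀ * V with hX
  -- key identity
  have hkey : X = Uᵀ * (B - A) * V * N' + Λ * X * N' := by
    have h1 : V = B * V * N' := by
      rw [hBV, Matrix.mul_assoc, hNN', Matrix.mul_one]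
    have h2 : Λ * X * N' = Uᵀ * A * V * N' := by
      rw [hX, ← Matrix.mul_assoc, ← hUA]
    rw [h2, hX]
    have h3 : Uᵀ * (B - A) * V * N' = Uᵀ * B * V * N' - Uᵀ * A * V * N' := by
      rw [Matrix.mul_sub, Matrix.sub_mul, Matrix.sub_mul]
    rw [h3, sub_add_cancel]
    conv_lhs => rw [h1]
    rw [← Matrix.mul_assoc, ← Matrix.mul_assoc]
  -- norm bounds
  have hnU : ‖Uᵀ‖ ≤ 1 := by
    have : (Uᵀ)ᴴ = U := by ext i j; simp [Matrix.conjTranspose_apply]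
    calc ‖Uᵀ‖ = ‖(Uᵀ)ᴴ‖ := (Matrix.l2_opNorm_conjTranspose Uᵀ).symm
      _ = ‖U‖ := by rw [this]
      _ ≤ 1 := l2_norm_orthonormal_le U hU
  have hnV : ‖V‖ ≤ 1 := l2_norm_orthonormal_le V hV
  have hnΛ : ‖Λ‖ ≤ μ := l2_norm_diagonal_le lamU μ hμ hlamU_bd
  have hnN' : ‖N'‖ ≤ (μ + τ)⁻¹ := by
    apply l2_norm_diagonal_le
    · positivity
    · intro c
      rw [abs_inv]
      have h1 : 0 < |lamV c| := lt_of_lt_of_le hμτ (hlamV_bd c)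
      exact inv_anti₀ hμτ (hlamV_bd c)
  have hnBA : ‖B - A‖ ≤ ε := by
    rw [show B - A = -(A - B) from (neg_sub A B).symm, norm_neg]
    rw [specNorm_eq] at hAB
    exact hAB
  have hXnn : 0 ≤ ‖X‖ := norm_nonneg X
  have t1 : ‖Uᵀ * (B - A)‖ ≤ ε := by
    calc ‖Uᵀ * (B - A)‖ ≤ ‖Uᵀ‖ * ‖B - A‖ := Matrix.l2_opNorm_mul _ _
      _ ≤ 1 * ε := mul_le_mul hnU hnBA (norm_nonneg _) zero_le_one
      _ = ε := one_mul ε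
  have t2 : ‖Uᵀ * (B - A) * V‖ ≤ ε := by
    calc ‖Uᵀ * (B - A) * V‖ ≤ ‖Uᵀ * (B - A)‖ * ‖V‖ := Matrix.l2_opNorm_mul _ _
      _ ≤ ε * 1 := mul_le_mul t1 hnV (norm_nonneg _) hε
      _ = ε := mul_one ε
  have t3 : ‖Uᵀ * (B - A) * V * N'‖ ≤ ε * (μ + τ)⁻¹ := by
    calc ‖Uᵀ * (B - A) * V * N'‖ ≤ ‖Uᵀ * (B - A) * V‖ * ‖N'‖ := Matrix.l2_opNorm_mul _ _
      _ ≤ ε * (μ + τ)⁻¹ := mul_le_mul t2 hnN' (norm_nonneg _) hε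
  have s1 : ‖Λ * X‖ ≤ μ * ‖X‖ := by
    calc ‖Λ * X‖ ≤ ‖Λ‖ * ‖X‖ := Matrix.l2_opNorm_mul _ _
      _ ≤ μ * ‖X‖ := mul_le_mul_of_nonneg_right hnΛ hXnn
  have s2 : ‖Λ * X * N'‖ ≤ μ * ‖X‖ * (μ + τ)⁻¹ := by
    calc ‖Λ * X * N'‖ ≤ ‖Λ * X‖ * ‖N'‖ := Matrix.l2_opNorm_mul _ _
      _ ≤ μ * ‖X‖ * (μ + τ)⁻¹ :=
        mul_le_mul s1 hnN' (norm_nonneg _) (mul_nonneg hμ hXnn)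
  have hbound : ‖X‖ ≤ ε * (μ + τ)⁻¹ + μ * ‖X‖ * (μ + τ)⁻¹ := by
    conv_lhs => rw [hkey]
    calc ‖Uᵀ * (B - A) * V * N' + Λ * X * N'‖
        ≤ ‖Uᵀ * (B - A) * V * N'‖ + ‖Λ * X * N'‖ := norm_add_le _ _
      _ ≤ ε * (μ + τ)⁻¹ + μ * ‖X‖ * (μ + τ)⁻¹ := add_le_add t3 s2
  have hgoal : ‖X‖ ≤ ε / τ := by
    rw [div_eq_mul_inv]
    have h1 : ‖X‖ * (μ + τ) ≤ ε + μ * ‖X‖ := by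
      have h0 := mul_le_mul_of_nonneg_right hbound (le_of_lt hμτ)
      calc ‖X‖ * (μ + τ) ≤ (ε * (μ + τ)⁻¹ + μ * ‖X‖ * (μ + τ)⁻¹) * (μ + τ) := h0
        _ = ε + μ * ‖X‖ := by field_simp
    have h2 : ‖X‖ * τ ≤ ε := by nlinarith
    calc ‖X‖ = ‖X‖ * τ * τ⁻¹ := by field_simp
      _ ≤ ε * τ⁻¹ := mul_le_mul_of_nonneg_right h2 (by positivity)
  rw [specNorm_eq]
  exact hgoal
end

section
/- (Inexact power iterates stay close to exact ones.) Let M ∈ R^{d×d} be a symmetric positive semidefinite matrix with eigenvalues λ₁ ≥ ⋯ ≥ λ_d > 0. Fix ε̃ > 0 and a unit vector w₀, and consider two sequences: ŵ*₀ = w₀ and ŵ*_t = M ŵ*_{t−1} for t ≥ 1; and ŵ₀ = w₀ and any sequence ŵ_t with ‖ŵ_t − M ŵ_{t−1}‖ ≤ ε̃ for t ≥ 1 (with ŵ_t ≠ 0). Define Γ(M,t) = (2/λ_d^t)·t if λ₁ = 1 and Γ(M,t) = (2/λ_d^t)·(λ₁^t − 1)/(λ₁ − 1) if λ₁ ≠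 1. Then for the normalized vectors w_t = ŵ_t/‖ŵ_t‖ and w*_t = ŵ*_t/‖ŵ*_t‖ it holds that ‖w_t − w*_t‖ ≤ ε̃ · Γ(M,t); moreover Γ(M,t) ≤ 2t · max{1, λ₁^t} / λ_d^t. -/
open Matrix

/-- the Euclidean norm of a real vector -/
noncomputable def evnorm {ι : Type*} [Fintype ι] (v : ι → ℝ) : ℝ := Real.sqrt (∑ i, v i ^ 2)

open Classical in
/-- `Γ(M,t)` expressed through the largest eigenvalue `l1 = λ₁` and
the smallest eigenvalue `ld = λ_d` of `M`. -/
noncomputable def Gamma (l1 ld : ℝ) (t : ℕ) : ℝ :=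
  if l1 = 1 then 2 / ld ^ t * t else 2 / ld ^ t * ((l1 ^ t - 1) / (l1 - 1))

/-! Since `‖M v‖ ≤ λ₁ ‖v‖`, the errors `eₜ = ‖ŵₜ − ŵ*ₜ‖` satisfy `eₜ₊₁ ≤ ε̃ + λ₁ eₜ`, hence
`eₜ ≤ ε̃ (1 + λ₁ + ⋯ + λ₁^(t-1))`. Since `‖M v‖ ≥ λ_d ‖v‖`, the exact iterates stay long:
`‖ŵ*ₜ‖ ≥ λ_d^t`. Normalisation costs at most the factor `2 / ‖ŵ*ₜ‖`, because
`‖x/‖x‖ − y/‖y‖‖ ≤ 2 ‖x − y‖ / ‖y‖`. Both bounds on `‖M v‖` come from expanding `v` in the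
orthonormal eigenbasis. -/

open Finset WithLp
open scoped NNReal RealInnerProductSpace

namespace NormedSpace
variable {V : Type*} [NormedAddCommGroup V] [NormedSpace ℝ V]

theorem norm_normalize_le_one (x : V) : ‖normalize x‖ ≤ 1 := by
  rw [normalize, norm_smul, norm_inv, norm_norm]
  exact inv_mul_le_one_of_le₀ le_rfl (norm_nonneg x)

theorem norm_normalize_sub_normalize_le (x : V) {y : V} (hy : y ≠ 0) :
    ‖normalize x - normalize y‖ ≤ 2 * ‖x - y‖ / ‖y‖ := by
  have hy' : 0 < ‖y‖ := norm_pos_iff.mpr hy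
  have hdecomp : normalize x - normalize y =
      ‖y‖⁻¹ • ((x - y) + (‖y‖ - ‖x‖) • normalize x) := by
    rw [sub_smul, norm_smul_normalize, normalize, normalize, smul_add, smul_sub, smul_sub,
      smul_smul, inv_mul_cancel₀ hy'.ne', one_smul]
    abel
  have hscale : ‖(‖y‖ - ‖x‖) • normalize x‖ ≤ ‖x - y‖ := by
    rw [norm_smul, Real.norm_eq_abs, norm_sub_rev x y]
    exact (mul_le_of_le_one_right (abs_nonneg _) (norm_normalize_le_one x)).trans
      (abs_norm_sub_norm_le y x)
  calc ‖normalize x - normalize y‖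
      = ‖y‖⁻¹ * ‖(x - y) + (‖y‖ - ‖x‖) • normalize x‖ := by
        rw [hdecomp, norm_smul, norm_inv, norm_norm]
    _ ≤ ‖y‖⁻¹ * (‖x - y‖ + ‖x - y‖) := by grw [norm_add_le, hscale]
    _ = 2 * ‖x - y‖ / ‖y‖ := by ring

end NormedSpace

theorem dist_le_mul_geom_sum_of_perturbed_orbit {X : Type*} [PseudoMetricSpace X] {f : X → X}
    {K : ℝ≥0} (hf : LipschitzWith K f) {x y : ℕ → X} {ε : ℝ} (h0 : x 0 = y 0)
    (hx : ∀ t, dist (x (t + 1)) (f (x t)) ≤ ε) (hy : ∀ t, y (t + 1) = f (y t)) (t : ℕ) :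
    dist (x t) (y t) ≤ ε * ∑ k ∈ range t, (K : ℝ) ^ k := by
  induction t with
  | zero => simp [h0]
  | succ t ih =>
    calc dist (x (t + 1)) (y (t + 1))
        ≤ dist (x (t + 1)) (f (x t)) + dist (f (x t)) (f (y t)) := by
          rw [hy]; exact dist_triangle _ _ _
      _ ≤ ε + K * (ε * ∑ k ∈ range t, (K : ℝ) ^ k) := by grw [hx t, hf.dist_le_mul, ih]
      _ = ε * ∑ k ∈ range (t + 1), (K : ℝ) ^ k := by rw [geom_sum_succ]; ring

theorem pow_mul_norm_le_norm_of_orbit {E : Type*} [SeminormedAddGroup E] {f : E → E} {c : ℝ}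
    (hc : 0 ≤ c) (hf : ∀ v, c * ‖v‖ ≤ ‖f v‖) {y : ℕ → E} (hy : ∀ t, y (t + 1) = f (y t))
    (t : ℕ) : c ^ t * ‖y 0‖ ≤ ‖y t‖ := by
  induction t with
  | zero => simp
  | succ t ih =>
    calc c ^ (t + 1) * ‖y 0‖ = c * (c ^ t * ‖y 0‖) := by ring
      _ ≤ ‖y (t + 1)‖ := by grw [ih, hy, hf]

namespace OrthonormalBasis
variable {ι E : Type*} [Fintype ι] [NormedAddCommGroup E] [InnerProductSpace ℝ E]
  (b : OrthonormalBasis ι ℝ E) {T : E →ₗ[ℝ] E} {lam : ι → ℝ}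

theorem repr_map_of_eigen (hT : ∀ i, T (b i) = lam i • b i) (x : E) (i : ι) :
    b.repr (T x) i = lam i * b.repr x i := by
  classical
  conv_lhs => rw [← b.sum_repr x]
  simp [map_sum, hT, Pi.single_apply, mul_comm]

theorem norm_sq_eq_sum_sq_repr (x : E) : ‖x‖ ^ 2 = ∑ i, b.repr x i ^ 2 := by
  rw [← b.repr.norm_map, EuclideanSpace.real_norm_sq_eq]

theorem norm_sq_map_of_eigen (hT : ∀ i, T (b i) = lam i • b i) (x : E) :
    ‖T x‖ ^ 2 = ∑ i, lam i ^ 2 * b.repr x i ^ 2 := by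
  simp only [b.norm_sq_eq_sum_sq_repr, b.repr_map_of_eigen hT, mul_pow]

theorem norm_map_le_of_eigen (hT : ∀ i, T (b i) = lam i • b i) {C : ℝ} (hC0 : 0 ≤ C)
    (hC : ∀ i, |lam i| ≤ C) (x : E) : ‖T x‖ ≤ C * ‖x‖ := by
  refine pow_le_pow_iff_left₀ (norm_nonneg _) (by positivity) two_ne_zero |>.mp ?_
  rw [b.norm_sq_map_of_eigen hT, mul_pow, b.norm_sq_eq_sum_sq_repr, mul_sum]
  refine sum_le_sum fun i _ => mul_le_mul_of_nonneg_right ?_ (sq_nonneg _)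
  exact sq_le_sq.mpr ((hC i).trans (le_abs_self C))

theorem mul_norm_le_norm_map_of_eigen (hT : ∀ i, T (b i) = lam i • b i) {c : ℝ} (hc0 : 0 ≤ c)
    (hc : ∀ i, c ≤ |lam i|) (x : E) : c * ‖x‖ ≤ ‖T x‖ := by
  refine pow_le_pow_iff_left₀ (by positivity) (norm_nonneg _) two_ne_zero |>.mp ?_
  rw [b.norm_sq_map_of_eigen hT, mul_pow, b.norm_sq_eq_sum_sq_repr, mul_sum]
  refine sum_le_sum fun i _ => mul_le_mul_of_nonneg_right ?_ (sq_nonneg _)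
  exact sq_le_sq.mpr (by rw [abs_of_nonneg hc0]; exact hc i)

end OrthonormalBasis

section Coordinates
variable {ι : Type*} [Fintype ι]

theorem evnorm_eq_norm_toLp (v : ι → ℝ) : evnorm v = ‖toLp 2 v‖ := by
  simp [evnorm, EuclideanSpace.norm_eq, sq_abs]

theorem vdot_eq_inner_toLp (v w : ι → ℝ) : vdot v w = ⟪toLp 2 v, toLp 2 w⟫ := by
  simp [vdot, PiLp.inner_apply, mul_comm]

theorem Matrix.exists_orthonormalBasis_toEuclideanLin_eigen [DecidableEq ι]
    {M : Matrix ι ι ℝ} {u : ι → ι → ℝ} {lam : ι → ℝ}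
    (horth : ∀ i j, vdot (u i) (u j) = if i = j then (1 : ℝ) else 0)
    (heig : ∀ i, M *ᵥ u i = lam i • u i) :
    ∃ b : OrthonormalBasis ι ℝ (EuclideanSpace ℝ ι), ∀ i, toEuclideanLin M (b i) = lam i • b i := by
  have hon : Orthonormal ℝ fun i => toLp 2 (u i) := by
    rw [orthonormal_iff_ite]
    simpa only [← vdot_eq_inner_toLp] using horth
  have hcard : Fintype.card ι = Module.finrank ℝ (EuclideanSpace ℝ ι) := by simp
  refine ⟨.mk hon (hon.linearIndependent.span_eq_top_of_card_eq_finrank' hcard).ge, fun i => ?_⟩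
  simp [Matrix.toLpLin_toLp, heig]

end Coordinates

theorem Gamma_eq_mul_geom_sum (l1 ld : ℝ) (t : ℕ) :
    Gamma l1 ld t = 2 / ld ^ t * ∑ k ∈ range t, l1 ^ k := by
  unfold Gamma
  split_ifs with h
  · simp [h]
  · rw [geom_sum_eq h]

theorem geom_sum_le_mul_max_one_pow {l : ℝ} (hl : 0 ≤ l) (t : ℕ) :
    ∑ k ∈ range t, l ^ k ≤ t * max 1 (l ^ t) := by
  have hterm : ∀ k ∈ range t, l ^ k ≤ max 1 (l ^ t) := fun k hk => by
    rcases le_total l 1 with hl1 | hl1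
    · exact (pow_le_one₀ hl hl1).trans (le_max_left _ _)
    · exact (pow_le_pow_right₀ hl1 (mem_range.mp hk).le).trans (le_max_right _ _)
  simpa using sum_le_card_nsmul _ _ _ hterm

theorem Gamma_le {l1 ld : ℝ} (hl1 : 0 ≤ l1) (hld : 0 ≤ ld) (t : ℕ) :
    Gamma l1 ld t ≤ 2 * t * max 1 (l1 ^ t) / ld ^ t := by
  calc Gamma l1 ld t = 2 / ld ^ t * ∑ k ∈ range t, l1 ^ k := Gamma_eq_mul_geom_sum l1 ld t
    _ ≤ 2 / ld ^ t * (t * max 1 (l1 ^ t)) := by grw [geom_sum_le_mul_max_one_pow hl1 t]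
    _ = 2 * t * max 1 (l1 ^ t) / ld ^ t := by ring

/-- **inexact power iterates stay close to exact ones.** If `ŵ*` are the exact
power iterates of a symmetric PSD matrix `M` (with eigenvalues `λ₁ ≥ ⋯ ≥ λ_d > 0`) and `ŵ` are
iterates with per-step error `ε̃`, then the normalized iterates satisfy
`‖w_t − w*_t‖ ≤ ε̃·Γ(M,t)`, and moreover `Γ(M,t) ≤ 2t·max{1, λ₁^t}/λ_d^t`. -/
theorem inexact_power_iterates_close {d : ℕ} (hd : 0 < d)
    (M : Matrix (Fin d) (Fin d) ℝ)
    (u : Fin d → Fin d → ℝ) (lam : Fin d → ℝ)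
    (horth : ∀ i i', vdot (u i) (u i') = if i = i' then (1 : ℝ) else 0)
    (heig : ∀ i, M.mulVec (u i) = lam i • u i)
    (hsorted : ∀ i i' : Fin d, i ≤ i' → lam i' ≤ lam i)
    (hpos : ∀ i, 0 < lam i)
    (εt : ℝ)
    (w₀ : Fin d → ℝ) (hw₀ : evnorm w₀ = 1)
    (wstar what : ℕ → Fin d → ℝ)
    (hstar₀ : wstar 0 = w₀)
    (hstar : ∀ t : ℕ, wstar (t + 1) = M.mulVec (wstar t))
    (hhat₀ : what 0 = w₀)
    (hhat : ∀ t : ℕ, evnorm (what (t + 1) - M.mulVec (what t)) ≤ εt) :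
    ∀ t : ℕ,
      evnorm ((evnorm (what t))⁻¹ • what t - (evnorm (wstar t))⁻¹ • wstar t)
        ≤ εt * Gamma (lam ⟨0, hd⟩) (lam ⟨d - 1, by omega⟩) t ∧
      Gamma (lam ⟨0, hd⟩) (lam ⟨d - 1, by omega⟩) t
        ≤ 2 * t * max 1 (lam ⟨0, hd⟩ ^ t) / lam ⟨d - 1, by omega⟩ ^ t := by
  set l1 := lam ⟨0, hd⟩
  set ld := lam ⟨d - 1, by omega⟩
  have hl1 : 0 < l1 := hpos _
  have hld : 0 < ld := hpos _
  intro t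
  refine ⟨?_, Gamma_le hl1.le hld.le t⟩
  obtain ⟨b, hb⟩ := exists_orthonormalBasis_toEuclideanLin_eigen horth heig
  set T := toEuclideanLin M
  have hT_le : ∀ v, ‖T v‖ ≤ l1 * ‖v‖ := b.norm_map_le_of_eigen hb hl1.le fun i =>
    (abs_of_pos (hpos i)).trans_le (hsorted _ i (Nat.zero_le _))
  have hT_ge : ∀ v, ld * ‖v‖ ≤ ‖T v‖ := b.mul_norm_le_norm_map_of_eigen hb hld.le fun i =>
    (hsorted i _ (Nat.le_sub_one_of_lt i.2)).trans_eq (abs_of_pos (hpos i)).symm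
  have hT_toLp : ∀ v, T (toLp 2 v) = toLp 2 (M *ᵥ v) := fun v => rfl
  have hy : ∀ t, toLp 2 (wstar (t + 1)) = T (toLp 2 (wstar t)) := fun t => by
    rw [hstar, hT_toLp]
  have hdist := dist_le_mul_geom_sum_of_perturbed_orbit
    (x := fun t => toLp 2 (what t)) (y := fun t => toLp 2 (wstar t))
    (AddMonoidHomClass.lipschitz_of_bound T l1 hT_le) (by rw [hhat₀, hstar₀])
    (fun t => by rw [hT_toLp, dist_eq_norm, ← toLp_sub, ← evnorm_eq_norm_toLp]; exact hhat t) hy t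
  rw [Real.coe_toNNReal _ hl1.le, dist_eq_norm] at hdist
  have hlow := pow_mul_norm_le_norm_of_orbit (y := fun t => toLp 2 (wstar t)) hld.le hT_ge hy t
  rw [hstar₀, ← evnorm_eq_norm_toLp, hw₀, mul_one] at hlow
  have hε : 0 ≤ εt := (Real.sqrt_nonneg _).trans (hhat 0)
  simp only [evnorm_eq_norm_toLp, toLp_sub, toLp_smul, Gamma_eq_mul_geom_sum]
  calc ‖NormedSpace.normalize (toLp 2 (what t)) - NormedSpace.normalize (toLp 2 (wstar t))‖
      ≤ 2 * ‖toLp 2 (what t) - toLp 2 (wstar t)‖ / ‖toLp 2 (wstar t)‖ :=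
        NormedSpace.norm_normalize_sub_normalize_le _
          (norm_pos_iff.mp ((pow_pos hld t).trans_le hlow))
    _ ≤ 2 * (εt * ∑ k ∈ range t, l1 ^ k) / ld ^ t := by gcongr
    _ = εt * (2 / ld ^ t * ∑ k ∈ range t, l1 ^ k) := by ring
end

section
/- (Mirror descent step.) Let g, z_k, x ∈ R^n and η, σ > 0, and let z_{k+1} = argmin_z { (1/2)‖z − z_k‖² + η⟨g, z⟩ + (ησ/2)‖z − x‖² }, i.e. z_{k+1} = (1/(1+ησ))(z_k + ησ x − η g). Then for every u ∈ R^n: η⟨g, z_{k+1} − u⟩ − (ησ/2)‖x − u‖² ≤ −(1/2)‖z_k − z_{k+1}‖² + (1/2)‖z_k − u‖² − ((1+ησ)/2)‖z_{k+1} − u‖². -/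
open RealInnerProductSpace

/-- **mirror descent step.** For
`z_{k+1} = argmin_z {½‖z − z_k‖² + η⟨g,z⟩ + (ησ/2)‖z − x‖²} = (1/(1+ησ))(z_k + ησx − ηg)`,
every `u` satisfies
`η⟨g, z_{k+1} − u⟩ − (ησ/2)‖x − u‖² ≤ −½‖z_k − z_{k+1}‖² + ½‖z_k − u‖² − ((1+ησ)/2)‖z_{k+1} − u‖²`. -/
theorem mirror_descent_step {n : ℕ}
    (η σ : ℝ) (hη : 0 < η) (hσ : 0 < σ)
    (g zk x zk1 : EuclideanSpace ℝ (Fin n))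
    (hzk1 : zk1 = (1 / (1 + η * σ)) • (zk + (η * σ) • x - η • g)) :
    ∀ u : EuclideanSpace ℝ (Fin n),
      η * ⟪g, zk1 - u⟫ - η * σ / 2 * ‖x - u‖ ^ 2
        ≤ -(1 / 2) * ‖zk - zk1‖ ^ 2 + 1 / 2 * ‖zk - u‖ ^ 2
          - (1 + η * σ) / 2 * ‖zk1 - u‖ ^ 2 := by
  intro u
  have hc : (1 + η * σ) ≠ 0 := by positivity
  have hg : η • g = (zk - zk1) + (η * σ) • (x - zk1) := by
    rw [hzk1]; match_scalars <;> (field_simp; try ring)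
  have h1 : ‖x - u‖ ^ 2 = ‖x - zk1‖ ^ 2 + 2 * ⟪x - zk1, zk1 - u⟫ + ‖zk1 - u‖ ^ 2 := by
    have e : x - u = (x - zk1) + (zk1 - u) := by abel
    rw [e, norm_add_sq_real]
  have h2 : ‖zk - u‖ ^ 2 = ‖zk - zk1‖ ^ 2 + 2 * ⟪zk - zk1, zk1 - u⟫ + ‖zk1 - u‖ ^ 2 := by
    have e : zk - u = (zk - zk1) + (zk1 - u) := by abel
    rw [e, norm_add_sq_real]
  have h3 : η * ⟪g, zk1 - u⟫ = ⟪zk - zk1, zk1 - u⟫ + η * σ * ⟪x - zk1, zk1 - u⟫ := by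
    rw [← real_inner_smul_left, hg, inner_add_left, real_inner_smul_left]
  have key : -(1 / 2) * ‖zk - zk1‖ ^ 2 + 1 / 2 * ‖zk - u‖ ^ 2 - (1 + η * σ) / 2 * ‖zk1 - u‖ ^ 2
      - (η * ⟪g, zk1 - u⟫ - η * σ / 2 * ‖x - u‖ ^ 2) = η * σ / 2 * ‖x - zk1‖ ^ 2 := by
    rw [h1, h2, h3]; ring
  nlinarith [mul_nonneg (mul_pos hη hσ).le (sq_nonneg ‖x - zk1‖)]
end

section
/- (Inexact accelerated coupling step, first form.) Let f : R^n → R be differentiable, L-smooth and σ-strongly convex with L, σ > 0. Let τ ∈ (0,1), η = 1/(τL), and ε̃ ≥ 0. Suppose x_{k+1}, y_{k+1}, z_k, z_{k+1} ∈ R^n and g ∈ R^n satisfy ‖g − ∇f(x_{k+1})‖ ≤ ε̃, y_{k+1} = x_{k+1} − (1/L) g, and z_{k+1} = (1/(1+ησ))(z_k + ησ x_{k+1} − η g). Then for every u ∈ R^n: η⟨∇f(x_{k+1}), z_k − u⟩ − (ησ/2)‖u − x_{k+1}‖² ≤ η²L (f(x_{k+1}) − f(y_{k+1})) + (1/2)‖z_k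 − u‖² − ((1 + ησ/2)/2)‖z_{k+1} − u‖² + ε̃²(η/σ + η²/2). -/
/-!
Expanding the strongly convex prox step gives the optimality relation
`z - z' = ησ (z' - x) + η g`; the three-point identity then rewrites
`η⟪∇f x, z - u⟫ - ησ/2‖u - x‖²` exactly, and two Young inequalities bound the cross terms by
`η²/2‖∇f x‖²` and `η/σ‖g - ∇f x‖²`. The descent lemma for the gradient step `y = x - g/L`
turns `η²/2‖∇f x‖²` into `η²L (f x - f y)` at the price of `η²/2‖g - ∇f x‖²`.
-/

open RealInnerProductSpace

section InnerProduct

variable {E : Type*} [NormedAddCommGroup E] [InnerProductSpace ℝ E]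

theorem two_mul_inner_le_mul_sq_add_inv_mul_sq {ε : ℝ} (hε : 0 < ε) (a b : E) :
    2 * ⟪a, b⟫ ≤ ε * ‖a‖ ^ 2 + ε⁻¹ * ‖b‖ ^ 2 := by
  linarith [real_inner_le_norm a b, two_mul_le_add_mul_sq hε (a := ‖a‖) (b := ‖b‖)]

theorem sub_eq_smul_sub_add_smul_of_eq_one_div_smul {a b : ℝ} {x z z' g : E} (ha : 1 + a ≠ 0)
    (hz' : z' = (1 / (1 + a)) • (z + a • x - b • g)) : z - z' = a • (z' - x) + b • g := by
  rw [hz']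
  match_scalars <;> field_simp <;> ring

theorem coupling_step_eq {η σ : ℝ} {x z z' g : E}
    (hstep : z - z' = (η * σ) • (z' - x) + η • g) (G u : E) :
    η * ⟪G, z - u⟫ - η * σ / 2 * ‖u - x‖ ^ 2
      = η * ⟪G, z - z'⟫ + 1 / 2 * ‖z - u‖ ^ 2 - 1 / 2 * ‖z - z'‖ ^ 2
        - (1 + η * σ) / 2 * ‖z' - u‖ ^ 2 - η * σ / 2 * ‖z' - x‖ ^ 2 - η * ⟪g - G, z' - u⟫ := by
  have hzu := norm_add_sq_real (z - z') (z' - u)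
  have hux := norm_sub_sq_real (z' - x) (z' - u)
  rw [sub_add_sub_cancel] at hzu
  rw [sub_sub_sub_cancel_left] at hux
  have hsplit : ⟪G, z - u⟫ = ⟪G, z - z'⟫ + ⟪G, z' - u⟫ := by
    rw [← inner_add_right, sub_add_sub_cancel]
  have hcross : ⟪z - z', z' - u⟫ = η * σ * ⟪z' - x, z' - u⟫ + η * ⟪g, z' - u⟫ := by
    rw [hstep, inner_add_left, real_inner_smul_left, real_inner_smul_left]
  rw [inner_sub_left]
  linear_combination η * hsplit - η * σ / 2 * hux - 1 / 2 * hzu - hcross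

theorem coupling_step_le {η σ : ℝ} (hη : 0 < η) (hσ : 0 < σ) {x z z' g : E}
    (hstep : z - z' = (η * σ) • (z' - x) + η • g) (G u : E) :
    η * ⟪G, z - u⟫ - η * σ / 2 * ‖u - x‖ ^ 2
      ≤ η ^ 2 / 2 * ‖G‖ ^ 2 + 1 / 2 * ‖z - u‖ ^ 2 - (1 + η * σ / 2) / 2 * ‖z' - u‖ ^ 2
        + η / σ * ‖g - G‖ ^ 2 := by
  have hG : η * ⟪G, z - z'⟫ ≤ η ^ 2 / 2 * ‖G‖ ^ 2 + 1 / 2 * ‖z - z'‖ ^ 2 := by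
    have h := two_mul_inner_le_mul_sq_add_inv_mul_sq hη G (z - z')
    have h' := mul_le_mul_of_nonneg_left h (by positivity : 0 ≤ η / 2)
    field_simp at h' ⊢
    linarith
  have he : -(η * ⟪g - G, z' - u⟫) ≤ η / σ * ‖g - G‖ ^ 2 + η * σ / 4 * ‖z' - u‖ ^ 2 := by
    have h := two_mul_inner_le_mul_sq_add_inv_mul_sq (by positivity : 0 < 2 / σ) (G - g) (z' - u)
    have h' := mul_le_mul_of_nonneg_left h (by positivity : 0 ≤ η / 2)
    rw [← neg_sub g G, inner_neg_left, norm_neg] at h'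
    field_simp at h' ⊢
    linarith
  have hx : 0 ≤ η * σ / 2 * ‖z' - x‖ ^ 2 := by positivity
  linarith [coupling_step_eq hstep G u]

end InnerProduct

section Gradient

variable {E : Type*} [NormedAddCommGroup E] [InnerProductSpace ℝ E] [CompleteSpace E]
  {f : E → ℝ} {L : ℝ}

theorem HasGradientAt.hasDerivAt_comp_add_smul {f' x d : E} {t : ℝ}
    (hf : HasGradientAt f f' (x + t • d)) :
    HasDerivAt (fun s : ℝ => f (x + s • d)) ⟪f', d⟫ t := by
  have hline : HasDerivAt (fun s : ℝ => x + s • d) d t := by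
    simpa using ((hasDerivAt_id t).smul_const d).const_add x
  simpa [Function.comp_def] using hf.hasFDerivAt.comp_hasDerivAt t hline

theorem inner_gradient_add_smul_le
    (hsmooth : ∀ x y, ‖gradient f x - gradient f y‖ ≤ L * ‖x - y‖) (x d : E) {t : ℝ}
    (ht : 0 ≤ t) : ⟪gradient f (x + t • d), d⟫ ≤ ⟪gradient f x, d⟫ + L * t * ‖d‖ ^ 2 := by
  have hcs : ⟪gradient f (x + t • d) - gradient f x, d⟫ ≤ L * t * ‖d‖ ^ 2 :=
    calc ⟪gradient f (x + t • d) - gradient f x, d⟫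
        ≤ ‖gradient f (x + t • d) - gradient f x‖ * ‖d‖ := real_inner_le_norm _ _
      _ ≤ L * ‖(x + t • d) - x‖ * ‖d‖ := by gcongr; exact hsmooth _ _
      _ = L * t * ‖d‖ ^ 2 := by
        rw [add_sub_cancel_left, norm_smul, Real.norm_of_nonneg ht]; ring
  rw [inner_sub_left] at hcs
  linarith

theorem le_add_inner_gradient_add_sq_of_lipschitz_gradient (hf : Differentiable ℝ f)
    (hsmooth : ∀ x y, ‖gradient f x - gradient f y‖ ≤ L * ‖x - y‖) (x y : E) :
    f y ≤ f x + ⟪gradient f x, y - x⟫ + L / 2 * ‖y - x‖ ^ 2 := by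
  set d := y - x
  have hφ (t : ℝ) : HasDerivAt (fun s : ℝ => f (x + s • d)) ⟪gradient f (x + t • d), d⟫ t :=
    (hf _).hasGradientAt.hasDerivAt_comp_add_smul
  have hB (t : ℝ) : HasDerivAt (fun s : ℝ => f x + s * ⟪gradient f x, d⟫ + L / 2 * s ^ 2 * ‖d‖ ^ 2)
      (⟪gradient f x, d⟫ + L * t * ‖d‖ ^ 2) t := by
    have hlin := (hasDerivAt_mul_const ⟪gradient f x, d⟫ (x := t)).const_add (f x)
    have hquad := ((hasDerivAt_pow 2 t).const_mul (L / 2)).mul_const (‖d‖ ^ 2)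
    exact (hlin.add hquad).congr_deriv (by push_cast; ring)
  have hbound := image_le_of_deriv_right_le_deriv_boundary (a := 0) (b := 1)
    (fun t _ => (hφ t).continuousAt.continuousWithinAt) (fun t _ => (hφ t).hasDerivWithinAt)
    (by simp) (fun t _ => (hB t).continuousAt.continuousWithinAt)
    (fun t _ => (hB t).hasDerivWithinAt)
    (fun t ht => inner_gradient_add_smul_le hsmooth x d ht.1) (Set.right_mem_Icc.2 zero_le_one)
  simpa [d] using hbound

theorem sq_norm_gradient_sub_sq_norm_sub_le (hL : 0 < L) (hf : Differentiable ℝ f)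
    (hsmooth : ∀ x y, ‖gradient f x - gradient f y‖ ≤ L * ‖x - y‖) (x g : E) :
    ‖gradient f x‖ ^ 2 - ‖g - gradient f x‖ ^ 2 ≤ 2 * L * (f x - f (x - L⁻¹ • g)) := by
  have hdesc := le_add_inner_gradient_add_sq_of_lipschitz_gradient hf hsmooth x (x - L⁻¹ • g)
  rw [sub_sub_cancel_left, inner_neg_right, real_inner_smul_right, norm_neg, norm_smul,
    Real.norm_of_nonneg (inv_nonneg.2 hL.le)] at hdesc
  have herr := norm_sub_sq_real g (gradient f x)
  rw [real_inner_comm] at herr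
  have h2L := mul_le_mul_of_nonneg_left hdesc (by positivity : 0 ≤ 2 * L)
  have hexpand : 2 * L * (f x + -(L⁻¹ * ⟪gradient f x, g⟫) + L / 2 * (L⁻¹ * ‖g‖) ^ 2)
      = 2 * L * f x - 2 * ⟪gradient f x, g⟫ + ‖g‖ ^ 2 := by
    field_simp; ring
  linarith

end Gradient

theorem inexact_coupling_step_one_general {n : ℕ}
    (f : EuclideanSpace ℝ (Fin n) → ℝ) (L σ : ℝ) (hL : 0 < L) (hσ : 0 < σ)
    (hdiff : Differentiable ℝ f)
    (hsmooth : ∀ x y, ‖gradient f x - gradient f y‖ ≤ L * ‖x - y‖)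
    (τ η εt : ℝ) (hτ₀ : 0 < τ) (hη : η = 1 / (τ * L))
    (xk1 yk1 zk zk1 g : EuclideanSpace ℝ (Fin n))
    (hg : ‖g - gradient f xk1‖ ≤ εt)
    (hy : yk1 = xk1 - (1 / L) • g)
    (hz : zk1 = (1 / (1 + η * σ)) • (zk + (η * σ) • xk1 - η • g)) :
    ∀ u : EuclideanSpace ℝ (Fin n),
      η * ⟪gradient f xk1, zk - u⟫ - η * σ / 2 * ‖u - xk1‖ ^ 2
        ≤ η ^ 2 * L * (f xk1 - f yk1) + 1 / 2 * ‖zk - u‖ ^ 2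
          - (1 + η * σ / 2) / 2 * ‖zk1 - u‖ ^ 2 + εt ^ 2 * (η / σ + η ^ 2 / 2) := by
  intro u
  have hηpos : 0 < η := by rw [hη]; positivity
  have hstep := sub_eq_smul_sub_add_smul_of_eq_one_div_smul (by positivity) hz
  have hcoupling := coupling_step_le hηpos hσ hstep (gradient f xk1) u
  have hdescent := sq_norm_gradient_sub_sq_norm_sub_le hL hdiff hsmooth xk1 g
  rw [← one_div, ← hy] at hdescent
  have herr : ‖g - gradient f xk1‖ ^ 2 ≤ εt ^ 2 := pow_le_pow_left₀ (norm_nonneg _) hg 2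
  have hdescent_scaled := mul_le_mul_of_nonneg_left hdescent (by positivity : 0 ≤ η ^ 2 / 2)
  have herr_scaled := mul_le_mul_of_nonneg_left herr (by positivity : 0 ≤ η / σ + η ^ 2 / 2)
  linarith

/-- **inexact accelerated coupling step, first form.** -/
theorem inexact_coupling_step_one {n : ℕ}
    (f : EuclideanSpace ℝ (Fin n) → ℝ) (L σ : ℝ) (hL : 0 < L) (hσ : 0 < σ)
    (hdiff : Differentiable ℝ f)
    (hsmooth : ∀ x y, ‖gradient f x - gradient f y‖ ≤ L * ‖x - y‖)
    (hsc : ∀ x y, f x + ⟪gradient f x, y - x⟫ + σ / 2 * ‖y - x‖ ^ 2 ≤ f y)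
    (τ η εt : ℝ) (hτ₀ : 0 < τ) (hτ₁ : τ < 1) (hη : η = 1 / (τ * L)) (hεt : 0 ≤ εt)
    (xk1 yk1 zk zk1 g : EuclideanSpace ℝ (Fin n))
    (hg : ‖g - gradient f xk1‖ ≤ εt)
    (hy : yk1 = xk1 - (1 / L) • g)
    (hz : zk1 = (1 / (1 + η * σ)) • (zk + (η * σ) • xk1 - η • g)) :
    ∀ u : EuclideanSpace ℝ (Fin n),
      η * ⟪gradient f xk1, zk - u⟫ - η * σ / 2 * ‖u - xk1‖ ^ 2
        ≤ η ^ 2 * L * (f xk1 - f yk1) + 1 / 2 * ‖zk - u‖ ^ 2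
          - (1 + η * σ / 2) / 2 * ‖zk1 - u‖ ^ 2 + εt ^ 2 * (η / σ + η ^ 2 / 2) :=
  inexact_coupling_step_one_general f L σ hL hσ hdiff hsmooth τ η εt hτ₀ hη xk1 yk1 zk zk1 g hg hy
    hz
end

section
/- (Inexact accelerated coupling step, second form.) Let f : R^n → R be differentiable, L-smooth and σ-strongly convex with L, σ > 0, and let x* be its minimizer. Let τ ∈ (0,1), η = 1/(τL), and ε̃ ≥ 0. Suppose y_k, z_k, x_{k+1}, y_{k+1}, z_{k+1} ∈ R^n and g ∈ R^n satisfy x_{k+1} = τ z_k + (1−τ) y_k, ‖g − ∇f(x_{k+1})‖ ≤ ε̃, y_{k+1} = x_{k+1} − (1/L) g, and z_{k+1} = (1/(1+ησ))(z_k + ησ x_{k+1} − η g). Then 0 ≤ ((1−τ)η/τ)(f(y_k) − f(x*)) − (η/τ)(f(y_{k+1}) − f(x*)) + (1/2)‖z_k − x*‖² − ((1 + ησ/2)/2)‖z_{k+1} − x*‖² + ε̃²(η/σ + η²/2). -/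
/-!
Write `d = ∇f(x_{k+1})`. The descent lemma shows that the inexact gradient step of length
`1/L = τη` decreases `f` by at least `τη/2 (‖d‖² - ‖g - d‖²)`. Strong convexity at the coupling
point `x_{k+1} = τ z_k + (1 - τ) y_k` bounds `f(x_{k+1})` by `(1 - τ) f(y_k) + τ f(x*)` minus
`τ (⟪d, x* - z_k⟫ + σ/2 ‖x_{k+1} - x*‖²)`, and the three-point identity for the `z`-update, after
completing the square in `d`, turns these terms into the decrease of `‖z - x*‖²`. The gradient
error enters only through `⟪g - d, z_{k+1} - x*⟫`, which Young's inequality absorbs into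
`ησ/4 ‖z_{k+1} - x*‖² + η ε̃²/σ`, and through `‖g - d‖² ≤ ε̃²`.
-/

open RealInnerProductSpace Set

section InnerProduct

variable {E : Type*} [NormedAddCommGroup E] [InnerProductSpace ℝ E]

theorem abs_real_inner_le_add_of_norm_le {a b : E} {ε σ : ℝ} (ha : ‖a‖ ≤ ε) (hσ : 0 < σ) :
    |⟪a, b⟫| ≤ σ / 4 * ‖b‖ ^ 2 + ε ^ 2 / σ := by
  have hsq : σ / 4 * ‖b‖ ^ 2 + ε ^ 2 / σ - ε * ‖b‖ = (σ * ‖b‖ - 2 * ε) ^ 2 / (4 * σ) := by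
    field_simp
    ring
  have : 0 ≤ (σ * ‖b‖ - 2 * ε) ^ 2 / (4 * σ) := by positivity
  calc |⟪a, b⟫| ≤ ‖a‖ * ‖b‖ := abs_real_inner_le_norm a b
    _ ≤ ε * ‖b‖ := by gcongr
    _ ≤ σ / 4 * ‖b‖ ^ 2 + ε ^ 2 / σ := by linarith

theorem two_mul_inner_sub_sub (a b u : E) :
    2 * ⟪a - b, b - u⟫ = ‖a - u‖ ^ 2 - ‖a - b‖ ^ 2 - ‖b - u‖ ^ 2 := by
  rw [← sub_add_sub_cancel a b u, norm_add_sq_real]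
  ring

/-- `hz` is the optimality condition of `z'` minimising
`w ↦ η ⟪g, w⟫ + η σ / 2 * ‖w - x‖ ^ 2 + 1 / 2 * ‖w - z‖ ^ 2`. -/
theorem norm_sq_le_of_mirror_step {η σ ε : ℝ} (hη : 0 ≤ η) (hσ : 0 < σ) {x z z' g d : E}
    (hz : (1 + η * σ) • z' = z + (η * σ) • x - η • g) (hg : ‖g - d‖ ≤ ε) (u : E) :
    (1 + η * σ / 2) / 2 * ‖z' - u‖ ^ 2 ≤ 1 / 2 * ‖z - u‖ ^ 2 + η * σ / 2 * ‖x - u‖ ^ 2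
      + η * ⟪d, u - z⟫ + η ^ 2 / 2 * ‖d‖ ^ 2 + η / σ * ε ^ 2 := by
  have hgrad : η • g = (z - z') + (η * σ) • (x - z') := by
    calc η • g = z + (η * σ) • x - (1 + η * σ) • z' := by rw [hz]; abel
      _ = (z - z') + (η * σ) • (x - z') := by module
  have hthree : 2 * η * ⟪g, z' - u⟫ = ‖z - u‖ ^ 2 - ‖z - z'‖ ^ 2 - ‖z' - u‖ ^ 2
      + η * σ * (‖x - u‖ ^ 2 - ‖x - z'‖ ^ 2 - ‖z' - u‖ ^ 2) := by
    rw [mul_assoc, ← real_inner_smul_left, hgrad, inner_add_left, real_inner_smul_left, mul_add,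
      two_mul_inner_sub_sub, ← mul_assoc, mul_comm 2, mul_assoc, two_mul_inner_sub_sub]
  have hsplit : ⟪d, u - z⟫ = -⟪g, z' - u⟫ + ⟪g - d, z' - u⟫ + ⟪d, z' - z⟫ := by
    simp only [inner_sub_left, inner_sub_right]; ring
  have hsq : 0 ≤ ‖η • d + (z' - z)‖ ^ 2 := sq_nonneg _
  rw [norm_add_sq_real, norm_smul, real_inner_smul_left, Real.norm_of_nonneg hη,
    norm_sub_rev z'] at hsq
  have herr := (abs_le.1 (abs_real_inner_le_add_of_norm_le (b := z' - u) hg hσ)).1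
  have hση : 0 ≤ η * σ := by positivity
  rw [hsplit]
  have hε : η * (ε ^ 2 / σ) = η / σ * ε ^ 2 := by ring
  linarith [mul_le_mul_of_nonneg_left herr hη, mul_nonneg hση (sq_nonneg ‖x - z'‖)]

end InnerProduct

section Gradient

variable {E : Type*} [NormedAddCommGroup E] [InnerProductSpace ℝ E] [CompleteSpace E] {f : E → ℝ}

theorem le_add_inner_gradient_add_of_lipschitz_gradient {L : ℝ} (hdiff : Differentiable ℝ f)
    (hsmooth : ∀ x y, ‖gradient f x - gradient f y‖ ≤ L * ‖x - y‖) (x y : E) :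
    f y ≤ f x + ⟪gradient f x, y - x⟫ + L / 2 * ‖y - x‖ ^ 2 := by
  set v := y - x
  have hderiv (t : ℝ) : HasDerivAt (fun t : ℝ => f (x + t • v) - t * ⟪gradient f x, v⟫)
      ⟪gradient f (x + t • v) - gradient f x, v⟫ t := by
    have hline : HasDerivAt (fun t : ℝ => x + t • v) v t := by
      simpa using ((hasDerivAt_id t).smul_const v).const_add x
    have hcomp : HasDerivAt (fun t => f (x + t • v)) ⟪gradient f (x + t • v), v⟫ t :=
      (hdiff _).hasGradientAt.hasFDerivAt.comp_hasDerivAt t hline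
    rw [inner_sub_left]
    exact hcomp.sub (hasDerivAt_mul_const _)
  have hbound : ∀ t ∈ Ico (0 : ℝ) 1,
      ⟪gradient f (x + t • v) - gradient f x, v⟫ ≤ L * t * ‖v‖ ^ 2 := fun t ht =>
    calc _ ≤ ‖gradient f (x + t • v) - gradient f x‖ * ‖v‖ := real_inner_le_norm _ _
      _ ≤ L * ‖x + t • v - x‖ * ‖v‖ := by gcongr; exact hsmooth _ _
      _ = L * t * ‖v‖ ^ 2 := by
        rw [add_sub_cancel_left, norm_smul, Real.norm_of_nonneg ht.1]; ring
  have hB (t : ℝ) : HasDerivAt (fun t : ℝ => f x + L / 2 * t ^ 2 * ‖v‖ ^ 2) (L * t * ‖v‖ ^ 2) t :=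
    ((((hasDerivAt_pow 2 t).const_mul (L / 2)).mul_const (‖v‖ ^ 2)).const_add
      (f x)).congr_deriv (by push_cast; ring)
  have := image_le_of_deriv_right_le_deriv_boundary (a := 0) (b := 1)
    (fun t _ => (hderiv t).continuousAt.continuousWithinAt)
    (fun t _ => (hderiv t).hasDerivWithinAt) (by simp)
    (fun t _ => (hB t).continuousAt.continuousWithinAt)
    (fun t _ => (hB t).hasDerivWithinAt) hbound (right_mem_Icc.2 zero_le_one)
  simp only [one_smul, one_mul, one_pow, v, add_sub_cancel] at this
  linarith

theorem le_add_half_mul_norm_sq_sub_of_gradient_step {L : ℝ} (hdiff : Differentiable ℝ f)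
    (hsmooth : ∀ x y, ‖gradient f x - gradient f y‖ ≤ L * ‖x - y‖) (x g : E) {t : ℝ}
    (ht : 0 ≤ t) (htL : t * L ≤ 1) :
    f (x - t • g) ≤ f x + t / 2 * (‖g - gradient f x‖ ^ 2 - ‖gradient f x‖ ^ 2) := by
  have hdesc := le_add_inner_gradient_add_of_lipschitz_gradient hdiff hsmooth x (x - t • g)
  rw [sub_sub_cancel_left, inner_neg_right, real_inner_smul_right, norm_neg, norm_smul,
    Real.norm_of_nonneg ht] at hdesc
  have hshort : t * ‖g‖ ^ 2 / 2 * (t * L) ≤ t * ‖g‖ ^ 2 / 2 * 1 :=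
    mul_le_mul_of_nonneg_left htL (by positivity)
  rw [norm_sub_sq_real, real_inner_comm]
  linarith

theorem add_mul_inner_gradient_le_of_coupling {σ τ : ℝ}
    (hsc : ∀ x y, f x + ⟪gradient f x, y - x⟫ + σ / 2 * ‖y - x‖ ^ 2 ≤ f y) (hσ : 0 ≤ σ)
    (hτ₀ : 0 ≤ τ) (hτ₁ : τ ≤ 1) {x y z : E} (hx : x = τ • z + (1 - τ) • y) (u : E) :
    f x + τ * (⟪gradient f x, u - z⟫ + σ / 2 * ‖x - u‖ ^ 2) ≤ (1 - τ) * f y + τ * f u := by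
  have hdir : (1 - τ) • (y - x) + τ • (u - x) = τ • (u - z) := by rw [hx]; module
  have hinner := congrArg (⟪gradient f x, ·⟫) hdir
  simp only [inner_add_right, real_inner_smul_right] at hinner
  have hy := mul_le_mul_of_nonneg_left (hsc x y) (sub_nonneg.2 hτ₁)
  have hu := mul_le_mul_of_nonneg_left (hsc x u) hτ₀
  rw [norm_sub_rev x u]
  linarith [mul_nonneg (mul_nonneg (sub_nonneg.2 hτ₁) hσ) (sq_nonneg ‖y - x‖)]

end Gradient

theorem inexact_coupling_step_two_general {n : ℕ}
    (f : EuclideanSpace ℝ (Fin n) → ℝ) (L σ : ℝ) (hL : 0 < L) (hσ : 0 < σ)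
    (hdiff : Differentiable ℝ f)
    (hsmooth : ∀ x y, ‖gradient f x - gradient f y‖ ≤ L * ‖x - y‖)
    (hsc : ∀ x y, f x + ⟪gradient f x, y - x⟫ + σ / 2 * ‖y - x‖ ^ 2 ≤ f y)
    (xstar : EuclideanSpace ℝ (Fin n))
    (τ η εt : ℝ) (hτ₀ : 0 < τ) (hτ₁ : τ < 1) (hη : η = 1 / (τ * L))
    (yk zk xk1 yk1 zk1 g : EuclideanSpace ℝ (Fin n))
    (hx : xk1 = τ • zk + (1 - τ) • yk)
    (hg : ‖g - gradient f xk1‖ ≤ εt)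
    (hy : yk1 = xk1 - (1 / L) • g)
    (hz : zk1 = (1 / (1 + η * σ)) • (zk + (η * σ) • xk1 - η • g)) :
    0 ≤ (1 - τ) * η / τ * (f yk - f xstar) - η / τ * (f yk1 - f xstar)
        + 1 / 2 * ‖zk - xstar‖ ^ 2 - (1 + η * σ / 2) / 2 * ‖zk1 - xstar‖ ^ 2
        + εt ^ 2 * (η / σ + η ^ 2 / 2) := by
  have hηpos : 0 < η := by rw [hη]; positivity
  have hstep : 1 / L = τ * η := by rw [hη]; field_simp
  set d := gradient f xk1
  have hdescent : f yk1 ≤ f xk1 + τ * η / 2 * (‖g - d‖ ^ 2 - ‖d‖ ^ 2) := by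
    rw [hy, hstep]
    exact le_add_half_mul_norm_sq_sub_of_gradient_step hdiff hsmooth xk1 g (by positivity)
      (by rw [← hstep, one_div_mul_cancel hL.ne'])
  have hcoupling := add_mul_inner_gradient_le_of_coupling hsc hσ.le hτ₀.le hτ₁.le hx xstar
  have hvalue : η / τ * (f yk1 - f xstar) ≤ (1 - τ) * η / τ * (f yk - f xstar)
      - η * (⟪d, xstar - zk⟫ + σ / 2 * ‖xk1 - xstar‖ ^ 2 - η / 2 * (‖g - d‖ ^ 2 - ‖d‖ ^ 2)) :=
    calc η / τ * (f yk1 - f xstar)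
        ≤ η / τ * ((1 - τ) * (f yk - f xstar)
          - τ * (⟪d, xstar - zk⟫ + σ / 2 * ‖xk1 - xstar‖ ^ 2 - η / 2 * (‖g - d‖ ^ 2 - ‖d‖ ^ 2))) :=
          mul_le_mul_of_nonneg_left (by linarith) (by positivity)
      _ = _ := by field_simp
  have hz' : (1 + η * σ) • zk1 = zk + (η * σ) • xk1 - η • g := by
    rw [hz, smul_smul, mul_one_div_cancel (by positivity), one_smul]
  have hmirror := norm_sq_le_of_mirror_step hηpos.le hσ hz' hg xstar
  have herr : ‖g - d‖ ^ 2 ≤ εt ^ 2 := pow_le_pow_left₀ (norm_nonneg _) hg 2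
  linarith [mul_le_mul_of_nonneg_left herr (by positivity : 0 ≤ η ^ 2 / 2)]

/-- **inexact accelerated coupling step, second form.** -/
theorem inexact_coupling_step_two {n : ℕ}
    (f : EuclideanSpace ℝ (Fin n) → ℝ) (L σ : ℝ) (hL : 0 < L) (hσ : 0 < σ)
    (hdiff : Differentiable ℝ f)
    (hsmooth : ∀ x y, ‖gradient f x - gradient f y‖ ≤ L * ‖x - y‖)
    (hsc : ∀ x y, f x + ⟪gradient f x, y - x⟫ + σ / 2 * ‖y - x‖ ^ 2 ≤ f y)
    (xstar : EuclideanSpace ℝ (Fin n)) (hstar : ∀ y, f xstar ≤ f y)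
    (τ η εt : ℝ) (hτ₀ : 0 < τ) (hτ₁ : τ < 1) (hη : η = 1 / (τ * L)) (hεt : 0 ≤ εt)
    (yk zk xk1 yk1 zk1 g : EuclideanSpace ℝ (Fin n))
    (hx : xk1 = τ • zk + (1 - τ) • yk)
    (hg : ‖g - gradient f xk1‖ ≤ εt)
    (hy : yk1 = xk1 - (1 / L) • g)
    (hz : zk1 = (1 / (1 + η * σ)) • (zk + (η * σ) • xk1 - η • g)) :
    0 ≤ (1 - τ) * η / τ * (f yk - f xstar) - η / τ * (f yk1 - f xstar)
        + 1 / 2 * ‖zk - xstar‖ ^ 2 - (1 + η * σ / 2) / 2 * ‖zk1 - xstar‖ ^ 2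
        + εt ^ 2 * (η / σ + η ^ 2 / 2) :=
  inexact_coupling_step_two_general f L σ hL hσ hdiff hsmooth hsc xstar τ η εt hτ₀ hτ₁ hη yk zk xk1
    yk1 zk1 g hx hg hy hz
end
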